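/- Let 0 < α < 1 and K^H(s,r) = c_H α r^{-α} ∫_r^s (θ-r)^{α-1} θ^α dθ for 0 < r ≤ s ≤ 1. Let g: [0,1] → ℝ be continuous. Then f₃₃(s,r) := (α s^α / Γ(1-α)) ∫_r^s ((K^H(s,r) - K^H(u,r))/(s-u)^{α+1}) u^{-α} g(u) du has diagonal limit f₃₃(s,s) := lim_{r→s⁻} f₃₃(s,r) = c_H Γ(1+α) g(s) - (c_H/Γ(1-α)) g(s). -/

import Mathlib

/-!
Substituting `u = r + (s - r) n` and `θ = r + (s - r) m`, all powers of `s - r` cancel and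
`f₃₃(s, r) = (c_H α² s^α r^{-α} / Γ(1 - α)) ∫₀¹ I_r(n) (1 - n)^{-α-1} h(r + (s - r) n) dn`
with `h u = u^{-α} g u` and `I_r(n) = ∫ₙ¹ m^{α-1} ((s - r) m + r)^α dm`.
As `r → s`, `I_r(n)` tends to `I_s(n) = s^α (1 - n^α) / α` and stays below it, so the integrand
is dominated by a multiple of `(1 - n^α) (1 - n)^{-α-1} ≤ (1 - n)^{-α}` and dominated convergence applies.
The limit integral `∫₀¹ (1 - n^α) (1 - n)^{-α-1} dn = Γ(α) Γ(1 - α) - 1/α` comes from integrating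
by parts against `(1 - n^α) (1 - n)^{-α} / α`, whose derivative is the integrand minus the Beta
integrand `n^{α-1} (1 - n)^{-α}`.
-/

open MeasureTheory intervalIntegral Filter
open Set Real Topology

section Beta

variable {a b : ℝ}

theorem ofReal_rpow_mul_one_sub_rpow {x : ℝ} (hx : x ∈ uIcc 0 1) (a b : ℝ) :
    ((x ^ (a - 1) * (1 - x) ^ (b - 1) : ℝ) : ℂ)
      = (x : ℂ) ^ ((a : ℂ) - 1) * (1 - (x : ℂ)) ^ ((b : ℂ) - 1) := by
  rw [uIcc_of_le zero_le_one] at hx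
  push_cast
  rw [Complex.ofReal_cpow hx.1, Complex.ofReal_cpow (sub_nonneg.2 hx.2)]
  push_cast
  ring

theorem intervalIntegrable_rpow_mul_one_sub_rpow (ha : 0 < a) (hb : 0 < b) :
    IntervalIntegrable (fun x : ℝ => x ^ (a - 1) * (1 - x) ^ (b - 1)) volume 0 1 := by
  have hF := Complex.betaIntegral_convergent (u := a) (v := b) (by simpa) (by simpa)
  rw [intervalIntegrable_iff] at hF ⊢
  refine IntegrableOn.congr_fun hF.re (fun x hx => ?_) measurableSet_uIoc
  rw [← ofReal_rpow_mul_one_sub_rpow (uIoc_subset_uIcc hx)]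
  exact RCLike.ofReal_re _

theorem integral_rpow_mul_one_sub_rpow (ha : 0 < a) (hb : 0 < b) :
    ∫ x in (0 : ℝ)..1, x ^ (a - 1) * (1 - x) ^ (b - 1) = Gamma a * Gamma b / Gamma (a + b) := by
  have hB := Complex.betaIntegral_eq_Gamma_mul_div (u := a) (v := b) (by simpa) (by simpa)
  rw [Complex.betaIntegral, ← integral_congr fun x hx => ofReal_rpow_mul_one_sub_rpow hx a b,
    intervalIntegral.integral_ofReal, ← Complex.ofReal_add, Complex.Gamma_ofReal,
    Complex.Gamma_ofReal, Complex.Gamma_ofReal] at hB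
  exact_mod_cast hB

end Beta

section OneSubRpow

variable {α : ℝ}

theorem one_sub_rpow_mul_one_sub_rpow_mem_Icc (hα : 0 < α) (hα1 : α ≤ 1) {n : ℝ}
    (hn : n ∈ Icc (0 : ℝ) 1) :
    (1 - n ^ α) * (1 - n) ^ (-α - 1) ∈ Icc 0 ((1 - n) ^ (-α)) := by
  have h1n : 0 ≤ 1 - n := sub_nonneg.2 hn.2
  have hq : 0 ≤ (1 - n ^ α) / (1 - n) :=
    div_nonneg (sub_nonneg.2 (rpow_le_one hn.1 hn.2 hα.le)) h1n
  -- `x ^ (-α - 1) = x ^ (-α) / x` also at `x = 0`, where both sides vanish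
  rw [show -α - 1 = -α + -1 by ring, rpow_add' h1n (by linarith), rpow_neg_one,
    mul_left_comm, ← div_eq_mul_inv, mul_comm]
  exact ⟨mul_nonneg hq (rpow_nonneg h1n _), mul_le_of_le_one_left (rpow_nonneg h1n _)
    (div_le_one_of_le₀ (sub_le_sub_left (self_le_rpow_of_le_one hn.1 hn.2 hα1) 1) h1n)⟩

theorem intervalIntegrable_one_sub_rpow (hα1 : α < 1) :
    IntervalIntegrable (fun n : ℝ => (1 - n) ^ (-α)) volume 0 1 := by
  simpa using
    ((intervalIntegrable_rpow' (a := 0) (b := 1) (r := -α) (by linarith)).comp_sub_left 1).symm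

theorem intervalIntegrable_one_sub_rpow_mul_one_sub_rpow (hα : 0 < α) (hα1 : α < 1) :
    IntervalIntegrable (fun n : ℝ => (1 - n ^ α) * (1 - n) ^ (-α - 1)) volume 0 1 := by
  refine (intervalIntegrable_one_sub_rpow hα1).mono_fun (by fun_prop) ?_
  rw [uIoc_of_le zero_le_one, EventuallyLE, ae_restrict_iff' measurableSet_Ioc]
  refine ae_of_all _ fun n hn => ?_
  have h := one_sub_rpow_mul_one_sub_rpow_mem_Icc hα hα1.le (Ioc_subset_Icc_self hn)
  rw [norm_of_nonneg h.1, norm_of_nonneg (h.1.trans h.2)]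
  exact h.2

theorem integral_one_sub_rpow_mul_one_sub_rpow (hα : 0 < α) (hα1 : α < 1) :
    ∫ n in (0 : ℝ)..1, (1 - n ^ α) * (1 - n) ^ (-α - 1) = Gamma α * Gamma (1 - α) - 1 / α := by
  set W : ℝ → ℝ := fun n => (1 - n ^ α) * (1 - n) ^ (-α) / α
  have hbeta := intervalIntegrable_rpow_mul_one_sub_rpow hα (sub_pos.2 hα1)
  simp only [sub_sub_cancel_left] at hbeta
  have hderiv : ∀ n ∈ Ioo (0 : ℝ) 1, HasDerivAt W
      ((1 - n ^ α) * (1 - n) ^ (-α - 1) - n ^ (α - 1) * (1 - n) ^ (-α)) n := by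
    intro n hn
    have hu := (hasDerivAt_rpow_const (p := α) (Or.inl hn.1.ne')).const_sub 1
    have hv :=
      ((hasDerivAt_id n).const_sub 1).rpow_const (p := -α) (Or.inl (sub_pos.2 hn.2).ne')
    refine ((hu.mul hv).div_const α).congr_deriv ?_
    simp only [id]
    field_simp
    ring
  have hW0 : Tendsto W (𝓝[>] 0) (𝓝 (1 / α)) := by
    have hc : ContinuousAt W 0 := by
      fun_prop (disch := first | exact Or.inr hα.le | norm_num)
    simpa [W, zero_rpow hα.ne'] using hc.continuousWithinAt.tendsto
  have hW1 : Tendsto W (𝓝[<] 1) (𝓝 0) := by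
    have hc : ContinuousAt (fun n : ℝ => (1 - n) ^ (1 - α) / α) 1 := by
      fun_prop (disch := exact Or.inr (sub_nonneg.2 hα1.le))
    have hbound : Tendsto (fun n : ℝ => (1 - n) ^ (1 - α) / α) (𝓝[<] 1) (𝓝 0) := by
      simpa [zero_rpow (sub_pos.2 hα1).ne'] using hc.continuousWithinAt.tendsto
    refine tendsto_of_tendsto_of_tendsto_of_le_of_le' tendsto_const_nhds hbound ?_ ?_ <;>
      filter_upwards [Ioo_mem_nhdsLT zero_lt_one] with n hn
    · exact div_nonneg (mul_nonneg (sub_nonneg.2 (rpow_le_one hn.1.le hn.2.le hα.le))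
        (rpow_nonneg (sub_nonneg.2 hn.2.le) _)) hα.le
    · have h1n : 0 ≤ 1 - n := sub_nonneg.2 hn.2.le
      rw [sub_eq_add_neg 1 α, rpow_add' h1n (by linarith), rpow_one]
      show (1 - n ^ α) * (1 - n) ^ (-α) / α ≤ _
      gcongr
      exact self_le_rpow_of_le_one hn.1.le hn.2.le hα1.le
  have hFTC := integral_eq_sub_of_hasDerivAt_of_tendsto one_pos hderiv
    ((intervalIntegrable_one_sub_rpow_mul_one_sub_rpow hα hα1).sub hbeta) hW0 hW1
  rw [integral_sub (intervalIntegrable_one_sub_rpow_mul_one_sub_rpow hα hα1) hbeta] at hFTC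
  have hB := integral_rpow_mul_one_sub_rpow hα (sub_pos.2 hα1)
  simp only [sub_sub_cancel_left, add_sub_cancel, Gamma_one, div_one] at hB
  linarith

end OneSubRpow

theorem integral_sub_rpow_mul_comp_mul_add (β : ℝ) (φ : ℝ → ℝ) {δ a b : ℝ} (hδ : 0 < δ)
    (ha : 0 ≤ a) (hb : 0 ≤ b) (r : ℝ) :
    ∫ θ in (δ * a + r)..(δ * b + r), (θ - r) ^ β * φ θ
      = δ ^ (β + 1) * ∫ m in a..b, m ^ β * φ (δ * m + r) := by
  rw [← mul_integral_comp_mul_add, rpow_add_one hδ.ne', mul_comm (δ ^ β) δ, mul_assoc,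
    ← intervalIntegral.integral_const_mul (δ ^ β)]
  refine congrArg (δ * ·) (integral_congr fun m hm => ?_)
  rw [add_sub_cancel_right, mul_rpow hδ.le ((le_min ha hb).trans hm.1)]
  ring

theorem intervalIntegrable_sub_rpow_mul {β : ℝ} (hβ : -1 < β) {φ : ℝ → ℝ} (hφ : Continuous φ)
    (c a b : ℝ) : IntervalIntegrable (fun θ => (θ - c) ^ β * φ θ) volume a b := by
  have h := (intervalIntegrable_rpow' (a := a - c) (b := b - c) hβ).comp_sub_right c
  simp only [sub_add_cancel] at h
  exact h.mul_continuousOn hφ.continuousOn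

theorem sub_mul_add_mem_Icc {r s m : ℝ} (hrs : r ≤ s) (hm : m ∈ Icc (0 : ℝ) 1) :
    (s - r) * m + r ∈ Icc r s :=
  ⟨by nlinarith [hm.1], by nlinarith [hm.2]⟩

section Rescaled

variable {α s r n : ℝ}

noncomputable def innerIntegral (α s r n : ℝ) : ℝ :=
  ∫ m in n..1, m ^ (α - 1) * ((s - r) * m + r) ^ α

noncomputable def rescaledIntegrand (α s : ℝ) (h : ℝ → ℝ) (r n : ℝ) : ℝ :=
  innerIntegral α s r n * (1 - n) ^ (-α - 1) * h ((s - r) * n + r)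

theorem integral_div_sub_rpow_eq_integral_rescaledIntegrand (hrs : r < s) (h : ℝ → ℝ) :
    ∫ u in r..s, (∫ θ in u..s, (θ - r) ^ (α - 1) * θ ^ α) / (s - u) ^ (α + 1) * h u
      = ∫ n in (0 : ℝ)..1, rescaledIntegrand α s h r n := by
  obtain ⟨δ, hδ, rfl⟩ : ∃ δ, 0 < δ ∧ s = δ * 1 + r := ⟨s - r, sub_pos.2 hrs, by ring⟩
  have e := mul_integral_comp_mul_add (a := 0) (b := 1) (c := δ) (d := r)
    (f := fun u =>
      (∫ θ in u..δ * 1 + r, (θ - r) ^ (α - 1) * θ ^ α) / (δ * 1 + r - u) ^ (α + 1) * h u)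
  rw [mul_zero, zero_add] at e
  rw [← e, ← intervalIntegral.integral_const_mul]
  refine integral_congr fun n hn => ?_
  rw [uIcc_of_le zero_le_one] at hn
  have h1n : 0 ≤ 1 - n := sub_nonneg.2 hn.2
  simp only [rescaledIntegrand, innerIntegral, add_sub_cancel_right]
  rw [integral_sub_rpow_mul_comp_mul_add _ _ hδ hn.1 zero_le_one, sub_add_cancel,
    show δ * 1 + r - (δ * n + r) = δ * (1 - n) by ring, mul_rpow hδ.le h1n,
    show -α - 1 = -(α + 1) by ring, rpow_neg h1n, rpow_add_one hδ.ne']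
  have hδα : δ ^ α ≠ 0 := (rpow_pos_of_pos hδ α).ne'
  field_simp

theorem intervalIntegrable_innerIntegrand (hα : 0 < α) (s r a b : ℝ) :
    IntervalIntegrable (fun m => m ^ (α - 1) * ((s - r) * m + r) ^ α) volume a b := by
  simpa using
    intervalIntegrable_sub_rpow_mul (by linarith) (by fun_prop (disch := exact hα.le)) 0 a b

theorem innerIntegral_self (hα : 0 < α) :
    innerIntegral α s s n = s ^ α * ((1 - n ^ α) / α) := by
  simp only [innerIntegral, sub_self, zero_mul, zero_add, intervalIntegral.integral_mul_const,
    integral_rpow (Or.inl (by linarith : -1 < α - 1)), sub_add_cancel, one_rpow]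
  ring

theorem innerIntegral_nonneg (hr : 0 ≤ r) (hrs : r ≤ s) (hn : n ∈ Icc (0 : ℝ) 1) :
    0 ≤ innerIntegral α s r n :=
  integral_nonneg hn.2 fun _ hm => mul_nonneg (rpow_nonneg (hn.1.trans hm.1) _)
    (rpow_nonneg (hr.trans (sub_mul_add_mem_Icc hrs ⟨hn.1.trans hm.1, hm.2⟩).1) _)

theorem innerIntegral_le_self (hα : 0 < α) (hr : 0 ≤ r) (hrs : r ≤ s)
    (hn : n ∈ Icc (0 : ℝ) 1) : innerIntegral α s r n ≤ innerIntegral α s s n := by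
  refine integral_mono_on hn.2 (intervalIntegrable_innerIntegrand hα s r n 1)
    (intervalIntegrable_innerIntegrand hα s s n 1) fun m hm => ?_
  have hm' := sub_mul_add_mem_Icc hrs ⟨hn.1.trans hm.1, hm.2⟩
  simp only [sub_self, zero_mul, zero_add]
  gcongr
  · exact rpow_nonneg (hn.1.trans hm.1) _
  · exact hr.trans hm'.1
  · exact hm'.2

theorem continuous_innerIntegral (hα : 0 < α) : Continuous (innerIntegral α s r) := by
  convert (continuous_primitive (intervalIntegrable_innerIntegrand hα s r) 1).neg using 2 with n
  ext n
  exact integral_symm 1 n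

theorem continuousAt_innerIntegral_self (hα : 0 < α) (hs : 0 < s) (hn : n ∈ Icc (0 : ℝ) 1) :
    ContinuousAt (fun r => innerIntegral α s r n) s := by
  refine continuousAt_of_dominated_interval (bound := fun m => m ^ (α - 1) * (2 * s) ^ α)
    (Eventually.of_forall fun r => (by fun_prop : Measurable _).aestronglyMeasurable) ?_
    ((intervalIntegrable_rpow' (by linarith)).mul_const _) ?_
  · filter_upwards [Ioo_mem_nhds hs (by linarith : s < 2 * s)] with r hr
    refine ae_of_all _ fun m hm => ?_
    rw [uIoc_of_le hn.2] at hm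
    have hm0 : 0 < m := hn.1.trans_lt hm.1
    have hX : 0 ≤ (s - r) * m + r := by nlinarith [hr.1, hm.2]
    rw [norm_of_nonneg (mul_nonneg (rpow_nonneg hm0.le _) (rpow_nonneg hX _))]
    gcongr
    nlinarith [hr.2, hm.2]
  · exact ae_of_all _ fun m _ => by fun_prop (disch := exact Or.inr hα.le)

theorem tendsto_integral_rescaledIntegrand (hα : 0 < α) (hα1 : α < 1) (hs : 0 < s)
    {h : ℝ → ℝ} (hh : ContinuousOn h (Ioi 0)) :
    Tendsto (fun r => ∫ n in (0 : ℝ)..1, rescaledIntegrand α s h r n) (𝓝[<] s)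
      (𝓝 (∫ n in (0 : ℝ)..1, rescaledIntegrand α s h s n)) := by
  obtain ⟨M, hM⟩ := isCompact_Icc.exists_bound_of_continuousOn
    (hh.mono fun u (hu : u ∈ Icc (s / 2) s) => (half_pos hs).trans_le hu.1)
  have hnear : ∀ᶠ r in 𝓝[<] s, r ∈ Ioo (s / 2) s := Ioo_mem_nhdsLT (half_lt_self hs)
  refine tendsto_integral_filter_of_dominated_convergence
    (fun n => s ^ α / α * M * ((1 - n ^ α) * (1 - n) ^ (-α - 1))) ?_ ?_
    ((intervalIntegrable_one_sub_rpow_mul_one_sub_rpow hα hα1).const_mul _) ?_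
  · filter_upwards [hnear] with r hr
    have hcont : ContinuousOn (fun n => h ((s - r) * n + r)) (uIoc 0 1) := by
      refine hh.comp (by fun_prop) fun n hn => ?_
      rw [uIoc_of_le zero_le_one] at hn
      have := sub_mul_add_mem_Icc hr.2.le (Ioc_subset_Icc_self hn)
      exact (half_pos hs).trans_le (hr.1.le.trans this.1)
    exact (((continuous_innerIntegral hα).measurable.mul (by fun_prop)).aestronglyMeasurable).mul
      (hcont.aestronglyMeasurable measurableSet_uIoc)
  · filter_upwards [hnear] with r hr
    refine ae_of_all _ fun n hn => ?_
    rw [uIoc_of_le zero_le_one] at hn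
    have hn' := Ioc_subset_Icc_self hn
    have hr0 : 0 ≤ r := (half_pos hs).le.trans hr.1.le
    have hI0 := innerIntegral_nonneg (α := α) hr0 hr.2.le hn'
    have hI := (innerIntegral_le_self hα hr0 hr.2.le hn').trans_eq (innerIntegral_self hα)
    have hP := rpow_nonneg (sub_nonneg.2 hn.2) (-α - 1)
    have hu := sub_mul_add_mem_Icc hr.2.le hn'
    have hH : ‖h ((s - r) * n + r)‖ ≤ M := hM _ ⟨hr.1.le.trans hu.1, hu.2⟩
    rw [rescaledIntegrand, norm_mul, norm_mul, norm_of_nonneg hI0, norm_of_nonneg hP]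
    calc _ ≤ s ^ α * ((1 - n ^ α) / α) * (1 - n) ^ (-α - 1) * M :=
          mul_le_mul (mul_le_mul_of_nonneg_right hI hP) hH (norm_nonneg _)
            (mul_nonneg (hI0.trans hI) hP)
      _ = _ := by ring
  · refine ae_of_all _ fun n hn => ?_
    rw [uIoc_of_le zero_le_one] at hn
    have hc : ContinuousAt (fun r => rescaledIntegrand α s h r n) s :=
      ((continuousAt_innerIntegral_self hα hs (Ioc_subset_Icc_self hn)).mul continuousAt_const).mul
        ((hh.continuousAt (Ioi_mem_nhds hs)).comp_of_eq (by fun_prop) (by ring))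
    exact hc.tendsto.mono_left nhdsWithin_le_nhds

theorem integral_rescaledIntegrand_self (hα : 0 < α) (hα1 : α < 1) (h : ℝ → ℝ) :
    ∫ n in (0 : ℝ)..1, rescaledIntegrand α s h s n
      = s ^ α * h s / α * (Gamma α * Gamma (1 - α) - 1 / α) := by
  simp only [rescaledIntegrand, innerIntegral_self hα, sub_self, zero_mul, zero_add]
  rw [← integral_one_sub_rpow_mul_one_sub_rpow hα hα1, ← intervalIntegral.integral_const_mul]
  exact integral_congr fun n _ => by ring

theorem integral_sub_div_rpow_eq {K : ℝ → ℝ → ℝ} {cH : ℝ} (hα : 0 < α) (hrs : r < s)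
    (hK : ∀ u ∈ Icc r s, K u r = cH * α * r ^ (-α) * ∫ θ in r..u, (θ - r) ^ (α - 1) * θ ^ α)
    (h : ℝ → ℝ) :
    ∫ u in r..s, (K s r - K u r) / (s - u) ^ (α + 1) * h u
      = cH * α * r ^ (-α) * ∫ n in (0 : ℝ)..1, rescaledIntegrand α s h r n := by
  have hint : ∀ u, IntervalIntegrable (fun θ => (θ - r) ^ (α - 1) * θ ^ α) volume r u :=
    intervalIntegrable_sub_rpow_mul (by linarith) (by fun_prop (disch := exact hα.le)) r r
  rw [← integral_div_sub_rpow_eq_integral_rescaledIntegrand hrs h,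
    ← intervalIntegral.integral_const_mul]
  refine integral_congr fun u hu => ?_
  rw [uIcc_of_le hrs.le] at hu
  rw [hK s ⟨hrs.le, le_rfl⟩, hK u hu, ← mul_sub, integral_interval_sub_left (hint s) (hint u)]
  ring

end Rescaled

theorem diagonal_limit_f33_general
    (α : ℝ) (hα : 0 < α) (hα1 : α < 1) (cH : ℝ)
    (g : ℝ → ℝ) (hg : Continuous g)
    (K : ℝ → ℝ → ℝ)
    (hK : ∀ r u : ℝ, 0 < r → r ≤ u → u ≤ 1 →
      K u r = cH * α * r ^ (-α) * ∫ θ in r..u, (θ - r) ^ (α - 1) * θ ^ α)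
    (s : ℝ) (hs : s ∈ Set.Ioc (0:ℝ) 1) :
    Tendsto
      (fun r : ℝ => (α * s ^ α / Real.Gamma (1 - α)) *
        ∫ u in r..s, ((K s r - K u r) / (s - u) ^ (α + 1)) * u ^ (-α) * g u)
      (nhdsWithin s (Set.Ioo 0 s))
      (nhds (cH * Real.Gamma (1 + α) * g s - cH / Real.Gamma (1 - α) * g s)) := by
  obtain ⟨hs0, hs1⟩ := hs
  have hh : ContinuousOn (fun u => u ^ (-α) * g u) (Ioi 0) := fun u hu =>
    ((continuousAt_rpow_const _ _ (Or.inl (ne_of_gt hu))).mul hg.continuousAt).continuousWithinAt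
  have hI := (tendsto_integral_rescaledIntegrand hα hα1 hs0 hh).mono_left
    (nhdsWithin_mono s (Ioo_subset_Iio_self (a := 0)))
  have hr : Tendsto (fun r : ℝ => r ^ (-α)) (𝓝[Ioo 0 s] s) (𝓝 (s ^ (-α))) :=
    (continuousAt_rpow_const s (-α) (Or.inl hs0.ne')).tendsto.mono_left nhdsWithin_le_nhds
  have hlim := ((hr.const_mul (cH * α)).mul hI).const_mul (α * s ^ α / Gamma (1 - α))
  rw [integral_rescaledIntegrand_self hα hα1] at hlim
  convert hlim.congr' ?_ using 2
  · rw [add_comm, Gamma_add_one hα.ne', rpow_neg hs0.le]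
    have hΓ : Gamma (1 - α) ≠ 0 := (Gamma_pos_of_pos (sub_pos.2 hα1)).ne'
    have hsα : s ^ α ≠ 0 := (rpow_pos_of_pos hs0 α).ne'
    field_simp
  · filter_upwards [self_mem_nhdsWithin] with r hr
    rw [← integral_sub_div_rpow_eq hα hr.2 (fun u hu => hK r u hr.1 hu.1 (hu.2.trans hs1))]
    simp only [mul_assoc]

theorem diagonal_limit_f33
    (α : ℝ) (hα : 0 < α) (hα1 : α < 1) (cH : ℝ) (hcH : 0 < cH)
    (g : ℝ → ℝ) (hg : Continuous g)
    (K : ℝ → ℝ → ℝ)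
    (hK : ∀ r u : ℝ, 0 < r → r ≤ u → u ≤ 1 →
      K u r = cH * α * r ^ (-α) * ∫ θ in r..u, (θ - r) ^ (α - 1) * θ ^ α)
    (s : ℝ) (hs : s ∈ Set.Ioc (0:ℝ) 1) :
    Tendsto
      (fun r : ℝ => (α * s ^ α / Real.Gamma (1 - α)) *
        ∫ u in r..s, ((K s r - K u r) / (s - u) ^ (α + 1)) * u ^ (-α) * g u)
      (nhdsWithin s (Set.Ioo 0 s))
      (nhds (cH * Real.Gamma (1 + α) * g s - cH / Real.Gamma (1 - α) * g s)) :=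
  diagonal_limit_f33_general α hα hα1 cH g hg K hK s hs
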